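/- arXiv:2206.01672 — 3 statements merged into one kernel-verified Lean document; each statement's English description precedes it below -/
import Mathlib

section
/- The minimal class of a quadratic normalisation is either a pair (m, n) of natural numbers with |m − n| ≤ 1, or (∞, ∞). -/
/-- Apply `N` to the length-two factor of `w` at positions `i, i+1` (1-indexed). -/
def applyAt {A : Type*} (N : List A → List A) (i : ℕ) (w : List A) : List A :=
  w.take (i - 1) ++ N ((w.drop (i - 1)).take 2) ++ w.drop (i + 1)

/-- Apply `N` to length-two factors at the given sequence of positions,
leftmost position in the list applied first. -/
def applySeq {A : Type*} (N : List A → List A) (pos : List ℕ) (w : List A) : List A :=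
  pos.foldl (fun v i => applyAt N i v) w

/-- The alternating sequence of positions `s, 3-s, s, ...` of length `k` (with `s ∈ {1,2}`). -/
def altSeq : ℕ → ℕ → List ℕ
  | _, 0 => []
  | s, k + 1 => s :: altSeq (3 - s) k

/-- A quadratic normalisation: a length-preserving map, identity on letters,
satisfying `N(u|v|w) = N(u|N(v)|w)`, for which a word is normal iff all its
length-two factors are, and which is computed by finitely many applications
of its restriction to length-two factors. -/
structure QuadraticNormalisation {A : Type*} (N : List A → List A) : Prop where
  len : ∀ w : List A, (N w).length = w.length
  letter : ∀ a : A, N [a] = [a]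
  mid : ∀ u v w : List A, N (u ++ v ++ w) = N (u ++ N v ++ w)
  normal_iff : ∀ w : List A, N w = w ↔
    ∀ (u v : List A) (a b : A), w = u ++ a :: b :: v → N [a, b] = [a, b]
  reach : ∀ w : List A, ∃ pos : List ℕ, N w = applySeq N pos w

/-- The normalisation is of left-class `m`. -/
def LeftClass {A : Type*} (N : List A → List A) (m : ℕ) : Prop :=
  ∀ w : List A, w.length = 3 → N w = applySeq N (altSeq 1 m) w

/-- The normalisation is of right-class `n`. -/
def RightClass {A : Type*} (N : List A → List A) (n : ℕ) : Prop :=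
  ∀ w : List A, w.length = 3 → N w = applySeq N (altSeq 2 n) w

/-- The normalisation is of class `(m, n)`. -/
def IsClass {A : Type*} (N : List A → List A) (m n : ℕ) : Prop :=
  LeftClass N m ∧ RightClass N n

/-- `e` is an `N`-neutral element: `N(w|e) = N(e|w) = N(w)|e` for every word `w`. -/
def Neutral {A : Type*} (N : List A → List A) (e : A) : Prop :=
  ∀ w : List A, N (w ++ [e]) = N w ++ [e] ∧ N (e :: w) = N w ++ [e]

/-! Applying `N` to one length-two factor does not change the normal form, so the first step of
an alternating sequence can be absorbed into `N`: a class of length `k` from one side yields a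
class of length `k + 1` from the other side. -/

namespace QuadraticNormalisation

variable {A : Type*} {N : List A → List A}

theorem length_applyAt (hN : QuadraticNormalisation N) {i : ℕ} (hi : 1 ≤ i) (w : List A) :
    (applyAt N i w).length = w.length := by
  simp only [applyAt, List.length_append, hN.len, List.length_take, List.length_drop]
  omega

theorem apply_applyAt (hN : QuadraticNormalisation N) {i : ℕ} (hi : 1 ≤ i) (w : List A) :
    N (applyAt N i w) = N w := by
  have hsplit : w = w.take (i - 1) ++ (w.drop (i - 1)).take 2 ++ w.drop (i + 1) := by
    rw [show i + 1 = (i - 1) + 2 by omega, ← List.drop_drop, List.append_assoc,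
      List.take_append_drop, List.take_append_drop]
  rw [applyAt, ← hN.mid, ← hsplit]

theorem eq_applySeq_altSeq_succ (hN : QuadraticNormalisation N) {s k : ℕ} (hs : 1 ≤ s)
    (h : ∀ w : List A, w.length = 3 → N w = applySeq N (altSeq (3 - s) k) w)
    (w : List A) (hw : w.length = 3) :
    N w = applySeq N (altSeq s (k + 1)) w :=
  calc N w = N (applyAt N s w) := (hN.apply_applyAt hs w).symm
    _ = applySeq N (altSeq (3 - s) k) (applyAt N s w) :=
      h _ ((hN.length_applyAt hs w).trans hw)

theorem rightClass_succ (hN : QuadraticNormalisation N) {m : ℕ} (hL : LeftClass N m) :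
    RightClass N (m + 1) :=
  hN.eq_applySeq_altSeq_succ (s := 2) (by norm_num) hL

theorem leftClass_succ (hN : QuadraticNormalisation N) {n : ℕ} (hR : RightClass N n) :
    LeftClass N (n + 1) :=
  hN.eq_applySeq_altSeq_succ (s := 1) le_rfl hR

end QuadraticNormalisation

/-- the minimal class of a quadratic normalisation is either a pair
`(m, n)` of naturals with `|m - n| ≤ 1`, or `(∞, ∞)` (i.e. neither class exists). -/
theorem minimal_class {A : Type*} (N : List A → List A)
    (hN : QuadraticNormalisation N) :
    ((∃ m : ℕ, LeftClass N m) ↔ (∃ n : ℕ, RightClass N n)) ∧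
    ((∃ m : ℕ, LeftClass N m) → (∃ n : ℕ, RightClass N n) →
      sInf {m : ℕ | LeftClass N m} ≤ sInf {n : ℕ | RightClass N n} + 1 ∧
      sInf {n : ℕ | RightClass N n} ≤ sInf {m : ℕ | LeftClass N m} + 1) := by
  refine ⟨⟨fun ⟨m, hm⟩ => ⟨m + 1, hN.rightClass_succ hm⟩,
    fun ⟨n, hn⟩ => ⟨n + 1, hN.leftClass_succ hn⟩⟩, fun hL hR => ⟨?_, ?_⟩⟩
  · exact Nat.sInf_le (hN.leftClass_succ (Nat.sInf_mem hR))
  · exact Nat.sInf_le (hN.rightClass_succ (Nat.sInf_mem hL))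
end

section
/- If (M, S, η) is a factorable monoid, then the length-preserving extension N_φ′ of the normalisation map N_φ associated to its local factorability structure φ = (ημ)|_{S²} defines a quadratic normalisation (S, N_φ′). -/
/-- Apply `phi` to pairs of adjacent letters, sweeping from left to right:
`sweep phi = phi_{|w|-1} ... phi_2 phi_1`. -/
def sweep {A : Type*} (phi : A × A → A × A) : List A → List A
  | [] => []
  | [a] => [a]
  | a :: b :: rest => (phi (a, b)).1 :: sweep phi ((phi (a, b)).2 :: rest)

/-- `N` satisfies the defining recursion of the normalisation map `N_phi`
associated to `phi`, with distinguished element `one`. -/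
def IsNormMap {A : Type*} (one : A) (phi : A × A → A × A) (N : List A → List A) : Prop :=
  N [] = [] ∧
  (∀ u v : List A, N (u ++ one :: v) = N (u ++ v)) ∧
  ∀ (s : A) (w : List A),
    (one ∈ sweep phi (s :: N w) → N (s :: w) = N (sweep phi (s :: N w))) ∧
    (one ∉ sweep phi (s :: N w) → N (s :: w) = sweep phi (s :: N w))

/-- Apply `F` to the first two components of a triple. -/
def app1 {X : Type*} (F : X × X → X × X) : X × X × X → X × X × X :=
  fun x => ((F (x.1, x.2.1)).1, (F (x.1, x.2.1)).2, x.2.2)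

/-- Apply `F` to the last two components of a triple. -/
def app2 {X : Type*} (F : X × X → X × X) : X × X × X → X × X × X :=
  fun x => (x.1, (F (x.2.1, x.2.2)).1, (F (x.2.1, x.2.2)).2)

/-- `F_{212}`, i.e. `F₂ F₁ F₂` (position 2 applied first). -/
def C212 {X : Type*} (F : X × X → X × X) : X × X × X → X × X × X :=
  app2 F ∘ app1 F ∘ app2 F

/-- `F_{2121}`, i.e. `F₁ F₂ F₁ F₂` (position 2 applied first). -/
def C2121 {X : Type*} (F : X × X → X × X) : X × X × X → X × X × X :=
  app1 F ∘ C212 F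

/-- `F_{1212}`, i.e. `F₂ F₁ F₂ F₁` (position 1 applied first). -/
def C1212 {X : Type*} (F : X × X → X × X) : X × X × X → X × X × X :=
  C212 F ∘ app1 F

/-- The minimal length of an `S`-word representing `f`. -/
noncomputable def lenS {M : Type*} [Monoid M] (S : Set M) (f : M) : ℕ :=
  sInf {n | ∃ l : List M, l.length = n ∧ (∀ x ∈ l, x ∈ S) ∧ l.prod = f}

/-- The sum of the lengths of the components of a triple. -/
noncomputable def tripLen {M : Type*} [Monoid M] (S : Set M) (x : M × M × M) : ℕ :=
  lenS S x.1 + lenS S x.2.1 + lenS S x.2.2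

/-- A factorability structure `η` on a monoid `M` with generating subset `S`
(containing `1`): `η = (η', η̄)` is a factorisation map such that, for
`F = η ∘ μ`, on every triple the maps `F₁F₂F₁F₂`, `F₂F₁F₂`, `F₂F₁F₂F₁`
coincide or each reduces the total length. -/
structure Factorability {M : Type*} [Monoid M] (S : Set M) (eta : M → M × M) : Prop where
  gen : ∀ f : M, ∃ l : List M, (∀ x ∈ l, x ∈ S) ∧ l.prod = f
  one_mem : (1 : M) ∈ S
  eta_one : eta 1 = (1, 1)
  head_mem : ∀ f : M, f ≠ 1 → (eta f).1 ∈ S ∧ (eta f).1 ≠ 1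
  split : ∀ f : M, f ≠ 1 → (eta f).1 * (eta f).2 = f
  geodesic : ∀ f : M, f ≠ 1 → lenS S f = lenS S (eta f).1 + lenS S (eta f).2
  axm : ∀ x : M × M × M,
    (C2121 (fun p : M × M => eta (p.1 * p.2)) x = C212 (fun p : M × M => eta (p.1 * p.2)) x ∧
      C1212 (fun p : M × M => eta (p.1 * p.2)) x = C212 (fun p : M × M => eta (p.1 * p.2)) x) ∨
    (tripLen S (C2121 (fun p : M × M => eta (p.1 * p.2)) x) < tripLen S x ∧
      tripLen S (C212 (fun p : M × M => eta (p.1 * p.2)) x) < tripLen S x ∧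
      tripLen S (C1212 (fun p : M × M => eta (p.1 * p.2)) x) < tripLen S x)

section Mlevel

variable {M : Type*} [Monoid M] (S : Set M) (eta : M → M × M)

theorem lenS_nonempty (hfac : Factorability S eta) (f : M) :
    {n | ∃ l : List M, l.length = n ∧ (∀ x ∈ l, x ∈ S) ∧ l.prod = f}.Nonempty := by
  obtain ⟨l, h1, h2⟩ := hfac.gen f
  exact ⟨l.length, l, rfl, h1, h2⟩

theorem lenS_spec (hfac : Factorability S eta) (f : M) :
    ∃ l : List M, l.length = lenS S f ∧ (∀ x ∈ l, x ∈ S) ∧ l.prod = f :=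
  Nat.sInf_mem (lenS_nonempty S eta hfac f)

theorem lenS_le {f : M} {l : List M} (h1 : ∀ x ∈ l, x ∈ S) (h2 : l.prod = f) :
    lenS S f ≤ l.length :=
  Nat.sInf_le ⟨l, rfl, h1, h2⟩

theorem lenS_one : lenS S (1 : M) = 0 :=
  Nat.le_zero.mp (lenS_le S (l := []) (by simp) (by simp))

theorem eq_one_of_lenS_eq_zero (hfac : Factorability S eta) {f : M}
    (h : lenS S f = 0) : f = 1 := by
  obtain ⟨l, hl, -, hp⟩ := lenS_spec S eta hfac f
  rw [h, List.length_eq_zero_iff] at hl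
  simp [hl] at hp
  exact hp.symm

theorem lenS_le_one {s : M} (hs : s ∈ S) : lenS S s ≤ 1 :=
  lenS_le S (l := [s]) (by simpa) (by simp)

theorem lenS_gen (hfac : Factorability S eta) {s : M} (hs : s ∈ S) (hs1 : s ≠ 1) :
    lenS S s = 1 := by
  have h1 := lenS_le_one S hs
  have h0 : lenS S s ≠ 0 := fun h => hs1 (eq_one_of_lenS_eq_zero S eta hfac h)
  omega

theorem mem_of_lenS_le_one (hfac : Factorability S eta) {c : M}
    (h : lenS S c ≤ 1) : c ∈ S := by
  obtain ⟨l, hl, hmem, hp⟩ := lenS_spec S eta hfac c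
  have h01 : lenS S c = 0 ∨ lenS S c = 1 := by omega
  rcases h01 with h' | h'
  · rw [h', List.length_eq_zero_iff] at hl
    subst hl
    simp at hp
    rw [← hp]; exact hfac.one_mem
  · rw [h'] at hl
    obtain ⟨a, ha⟩ := List.length_eq_one_iff.mp hl
    subst ha
    simp at hp
    rw [← hp]; exact hmem a (by simp)

theorem lenS_mul_le (hfac : Factorability S eta) (u v : M) :
    lenS S (u * v) ≤ lenS S u + lenS S v := by
  obtain ⟨l1, hl1, hm1, hp1⟩ := lenS_spec S eta hfac u
  obtain ⟨l2, hl2, hm2, hp2⟩ := lenS_spec S eta hfac v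
  have := lenS_le S (f := u * v) (l := l1 ++ l2) (by
    intro x hx; rcases List.mem_append.mp hx with h | h
    · exact hm1 x h
    · exact hm2 x h) (by simp [hp1, hp2])
  simpa [hl1, hl2] using this

theorem eta_mul (hfac : Factorability S eta) (f : M) :
    (eta f).1 * (eta f).2 = f := by
  by_cases h : f = 1
  · subst h; rw [hfac.eta_one]; simp
  · exact hfac.split f h

theorem eta_gen (hfac : Factorability S eta) {s : M} (hs : s ∈ S) (hs1 : s ≠ 1) :
    eta s = (s, 1) := by
  have hgeo := hfac.geodesic s hs1
  have h1 : lenS S (eta s).1 = 1 :=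
    lenS_gen S eta hfac (hfac.head_mem s hs1).1 (hfac.head_mem s hs1).2
  rw [lenS_gen S eta hfac hs hs1, h1] at hgeo
  have h2 : (eta s).2 = 1 := eq_one_of_lenS_eq_zero S eta hfac (by omega)
  have h3 : (eta s).1 = s := by
    have := hfac.split s hs1
    rwa [h2, mul_one] at this
  rw [Prod.ext_iff]
  exact ⟨h3, h2⟩

theorem lenS_eta1 (hfac : Factorability S eta) {f : M} (hf : f ≠ 1) :
    lenS S (eta f).1 = 1 :=
  lenS_gen S eta hfac (hfac.head_mem f hf).1 (hfac.head_mem f hf).2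

theorem lenS_eta2_lt (hfac : Factorability S eta) {f : M} (hf : f ≠ 1) :
    lenS S (eta f).2 < lenS S f := by
  have := hfac.geodesic f hf
  rw [lenS_eta1 S eta hfac hf] at this
  omega

open Classical in
/-- The normal form of `f`, obtained by iterating `eta`. -/
noncomputable def NF (hfac : Factorability S eta) (f : M) : List M :=
  if h : f = 1 then [] else (eta f).1 :: NF hfac (eta f).2
termination_by lenS S f
decreasing_by exact lenS_eta2_lt S eta hfac h

variable (hfac : Factorability S eta)

theorem NF_one : NF S eta hfac 1 = [] := by rw [NF]; simp

theorem NF_ne {f : M} (hf : f ≠ 1) :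
    NF S eta hfac f = (eta f).1 :: NF S eta hfac (eta f).2 := by
  rw [NF]; simp only [hf, dite_false]

end Mlevel
section Mlevel2

variable {M : Type*} [Monoid M] (S : Set M) (eta : M → M × M)

theorem app1_eq (F : M × M → M × M) (x y z : M) :
    app1 F (x, y, z) = ((F (x, y)).1, (F (x, y)).2, z) := rfl

theorem app2_eq (F : M × M → M × M) (x y z : M) :
    app2 F (x, y, z) = (x, (F (y, z)).1, (F (y, z)).2) := rfl

theorem NF_prod (hfac : Factorability S eta) (f : M) : (NF S eta hfac f).prod = f := by
  by_cases hf : f = 1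
  · subst hf; rw [NF_one]; simp
  · rw [NF_ne S eta hfac hf]
    simp only [List.prod_cons]
    rw [NF_prod hfac (eta f).2]
    exact eta_mul S eta hfac f
termination_by lenS S f
decreasing_by exact lenS_eta2_lt S eta hfac hf

theorem NF_length (hfac : Factorability S eta) (f : M) :
    (NF S eta hfac f).length = lenS S f := by
  by_cases hf : f = 1
  · subst hf; rw [NF_one, lenS_one]; rfl
  · rw [NF_ne S eta hfac hf]
    simp only [List.length_cons]
    rw [NF_length hfac (eta f).2]
    have := hfac.geodesic f hf
    rw [lenS_eta1 S eta hfac hf] at this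
    omega
termination_by lenS S f
decreasing_by exact lenS_eta2_lt S eta hfac hf

theorem NF_mem (hfac : Factorability S eta) {f : M} {x : M}
    (hx : x ∈ NF S eta hfac f) : x ∈ S ∧ x ≠ 1 := by
  by_cases hf : f = 1
  · rw [hf, NF_one] at hx; simp at hx
  · rw [NF_ne S eta hfac hf] at hx
    rcases List.mem_cons.mp hx with h | h
    · subst h; exact hfac.head_mem f hf
    · exact NF_mem hfac h
termination_by lenS S f
decreasing_by exact lenS_eta2_lt S eta hfac hf

theorem NF_eq_nil_iff (hfac : Factorability S eta) {f : M} :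
    NF S eta hfac f = [] ↔ f = 1 := by
  constructor
  · intro h
    by_contra hf
    rw [NF_ne S eta hfac hf] at h
    simp at h
  · intro h; rw [h, NF_one]

/-- `(u, v)` is a stable (normal) pair. -/
def Stb (u v : M) : Prop := eta (u * v) = (u, v)

theorem Stb_eta (hfac : Factorability S eta) (f : M) :
    Stb eta (eta f).1 (eta f).2 := by
  unfold Stb
  rw [eta_mul S eta hfac f]

/-- Key lemma from the factorability axiom: stability against the whole
right factor implies stability against its first letter. -/
theorem stb_head (hfac : Factorability S eta) {s g : M} (hs : s ∈ S)
    (hstb : Stb eta s g) (hg : g ≠ 1) : Stb eta s (eta g).1 := by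
  unfold Stb at hstb ⊢
  have hsg : s * g ≠ 1 := by
    intro h
    rw [h, hfac.eta_one] at hstb
    exact hg ((Prod.ext_iff.mp hstb).2).symm
  have hs1 : s ≠ 1 := by
    intro h
    have := hfac.head_mem (s * g) hsg
    rw [hstb] at this
    exact this.2 h
  have hetas : eta s = (s, 1) := eta_gen S eta hfac hs hs1
  set F : M × M → M × M := fun p : M × M => eta (p.1 * p.2) with hF
  have hFeq : ∀ x y : M, F (x, y) = eta (x * y) := fun _ _ => rfl
  have key := hfac.axm (1, s, g)
  have h2 : app2 F (1, s, g) = (1, s, g) := by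
    rw [app2_eq, hFeq, hstb]
  have s1 : app1 F (1, s, g) = (s, 1, g) := by
    rw [app1_eq, hFeq, one_mul, hetas]
  have s2 : app2 F (s, 1, g) = (s, (eta g).1, (eta g).2) := by
    rw [app2_eq, hFeq, one_mul]
  have h212 : C212 F (1, s, g) = (s, (eta g).1, (eta g).2) := by
    show app2 F (app1 F (app2 F (1, s, g))) = _
    rw [h2, s1, s2]
  have h2121 : C2121 F (1, s, g) =
      ((eta (s * (eta g).1)).1, (eta (s * (eta g).1)).2, (eta g).2) := by
    show app1 F (C212 F (1, s, g)) = _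
    rw [h212, app1_eq, hFeq]
  rcases key with ⟨hA, -⟩ | ⟨-, hB, -⟩
  · rw [h2121, h212] at hA
    have h1 := (Prod.ext_iff.mp hA).1
    have h2' := (Prod.ext_iff.mp (Prod.ext_iff.mp hA).2).1
    rw [Prod.ext_iff]
    exact ⟨h1, h2'⟩
    
  · exfalso
    rw [h212] at hB
    have hgeo := hfac.geodesic g hg
    rw [lenS_eta1 S eta hfac hg] at hgeo
    have hls : lenS S s = 1 := lenS_gen S eta hfac hs hs1
    simp only [tripLen, lenS_one, hls, lenS_eta1 S eta hfac hg] at hB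
    omega

/-- Key lemma: if `b ∈ S∖{1}` is stable against the head of `h ≠ 1`, then
`(b, h)` is a stable pair. -/
theorem stb_prepend (hfac : Factorability S eta) {b h : M} (hb : b ∈ S) (hb1 : b ≠ 1)
    (hh : h ≠ 1) (hstb : Stb eta b (eta h).1) : eta (b * h) = (b, h) := by
  set F : M × M → M × M := fun p : M × M => eta (p.1 * p.2) with hF
  have hFeq : ∀ x y : M, F (x, y) = eta (x * y) := fun _ _ => rfl
  set d := (eta h).1 with hd
  set h2 := (eta h).2 with hh2
  have hetah : eta h = (d, h2) := rfl
  have hdh : d * h2 = h := eta_mul S eta hfac h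
  have hd1 : d ≠ 1 := (hfac.head_mem h hh).2
  have hetab : eta b = (b, 1) := eta_gen S eta hfac hb hb1
  have hbd : eta (b * d) = (b, d) := hstb
  have s1 : app1 F (1, b, h) = (b, 1, h) := by
    rw [app1_eq, hFeq, one_mul, hetab]
  have s2 : app2 F (b, 1, h) = (b, d, h2) := by
    rw [app2_eq, hFeq, one_mul, hetah]
  have s3 : app1 F (b, d, h2) = (b, d, h2) := by
    rw [app1_eq, hFeq, hbd]
  have s4 : app2 F (b, d, h2) = (b, d, h2) := by
    rw [app2_eq, hFeq, hdh, hetah]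
  have h1212 : C1212 F (1, b, h) = (b, d, h2) := by
    show app2 F (app1 F (app2 F (app1 F (1, b, h)))) = _
    rw [s1, s2, s3, s4]
  have hlb : lenS S b = 1 := lenS_gen S eta hfac hb hb1
  have hgeo := hfac.geodesic h hh
  have hlen1212 : tripLen S ((b, d, h2) : M × M × M) = 1 + lenS S h := by
    simp only [tripLen, hlb]
    rw [← hd, ← hh2] at hgeo
    omega
  have hlenx : tripLen S ((1 : M), b, h) = 1 + lenS S h := by
    simp only [tripLen, hlb, lenS_one]
  -- b * h ≠ 1
  have hbh : b * h ≠ 1 := by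
    intro hbh1
    have key := hfac.axm (1, b, h)
    have u1 : app2 F (1, b, h) = (1, 1, 1) := by
      rw [app2_eq, hFeq, hbh1, hfac.eta_one]
    have u2 : app1 F ((1 : M), (1 : M), (1 : M)) = (1, 1, 1) := by
      rw [app1_eq, hFeq, one_mul, hfac.eta_one]
    have u3 : app2 F ((1 : M), (1 : M), (1 : M)) = (1, 1, 1) := by
      rw [app2_eq, hFeq, one_mul, hfac.eta_one]
    have h212 : C212 F (1, b, h) = (1, 1, 1) := by
      show app2 F (app1 F (app2 F (1, b, h))) = _
      rw [u1, u2, u3]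
    rcases key with ⟨-, hB⟩ | ⟨-, -, hB⟩
    · rw [h1212, h212] at hB
      exact hb1 (Prod.ext_iff.mp hB).1
    · rw [h1212, hlenx, hlen1212] at hB
      omega
  -- main computation
  set p := (eta (b * h)).1 with hp
  set q := (eta (b * h)).2 with hq
  have hetabh : eta (b * h) = (p, q) := rfl
  have hp1 : p ≠ 1 := (hfac.head_mem (b * h) hbh).2
  have hetap : eta p = (p, 1) := eta_gen S eta hfac (hfac.head_mem (b * h) hbh).1 hp1
  have v1 : app2 F (1, b, h) = (1, p, q) := by
    rw [app2_eq, hFeq, hetabh]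
  have v2 : app1 F (1, p, q) = (p, 1, q) := by
    rw [app1_eq, hFeq, one_mul, hetap]
  have v3 : app2 F (p, 1, q) = (p, (eta q).1, (eta q).2) := by
    rw [app2_eq, hFeq, one_mul]
  have h212 : C212 F (1, b, h) = (p, (eta q).1, (eta q).2) := by
    show app2 F (app1 F (app2 F (1, b, h))) = _
    rw [v1, v2, v3]
  have key := hfac.axm (1, b, h)
  rcases key with ⟨-, hB⟩ | ⟨-, -, hB⟩
  · rw [h1212, h212] at hB
    have e1 : b = p := (Prod.ext_iff.mp hB).1
    have e2 : d = (eta q).1 := (Prod.ext_iff.mp (Prod.ext_iff.mp hB).2).1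
    have e3 : h2 = (eta q).2 := (Prod.ext_iff.mp (Prod.ext_iff.mp hB).2).2
    have hq1 : q ≠ 1 := by
      intro h'
      rw [h', hfac.eta_one] at e2
      exact hd1 e2
    have : q = h := by
      have := eta_mul S eta hfac q
      rw [← e2, ← e3] at this
      rw [← this, hdh]
    rw [hetabh, ← e1, this]
  · exfalso
    rw [h1212, hlenx, hlen1212] at hB
    omega

end Mlevel2
section Mlevel3

theorem sweep_nil {A : Type*} (phi : A × A → A × A) : sweep phi [] = [] := by rw [sweep]

theorem sweep_single {A : Type*} (phi : A × A → A × A) (a : A) : sweep phi [a] = [a] := by rw [sweep]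

theorem sweep_cons {A : Type*} (phi : A × A → A × A) (a b : A) (r : List A) :
    sweep phi (a :: b :: r) = (phi (a, b)).1 :: sweep phi ((phi (a, b)).2 :: r) := by rw [sweep]

theorem sweep_length {A : Type*} (phi : A × A → A × A) : ∀ l : List A,
    (sweep phi l).length = l.length
  | [] => by rw [sweep_nil]
  | [_] => by rw [sweep_single]
  | a :: b :: r => by
    rw [sweep_cons]
    simp only [List.length_cons]
    rw [sweep_length phi ((phi (a, b)).2 :: r)]
    simp
termination_by l => l.length

variable {M : Type*} [Monoid M] (S : Set M) (eta : M → M × M)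

/-- The sweep map at the level of the monoid. -/
def sweepM : List M → List M := sweep (fun p : M × M => eta (p.1 * p.2))

theorem sweepM_cons (a b : M) (r : List M) :
    sweepM eta (a :: b :: r) = (eta (a * b)).1 :: sweepM eta ((eta (a * b)).2 :: r) := by
  unfold sweepM
  rw [sweep_cons]

theorem sweepM_single (a : M) : sweepM eta [a] = [a] := by
  rw [sweepM, sweep_single]

theorem sweepM_length (l : List M) : (sweepM eta l).length = l.length :=
  sweep_length _ l

theorem sweepM_prod (hfac : Factorability S eta) : ∀ l : List M,
    (sweepM eta l).prod = l.prod
  | [] => by rw [sweepM, sweep_nil]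
  | [_] => by rw [sweepM, sweep_single]
  | a :: b :: r => by
    rw [sweepM_cons]
    simp only [List.prod_cons]
    rw [sweepM_prod hfac ((eta (a * b)).2 :: r)]
    simp only [List.prod_cons, ← mul_assoc]
    rw [eta_mul S eta hfac (a * b)]
termination_by l => l.length

theorem stb_bd (hfac : Factorability S eta) {s a g2 b c : M} (hs : s ∈ S) (ha : a ∈ S)
    (ha1 : a ≠ 1) (hstb : eta (a * g2) = (a, g2)) (hsa : eta (s * a) = (b, c))
    (hb1 : b ≠ 1) (hlen : lenS S (c * g2) = 1 + lenS S g2) :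
    Stb eta b (eta (c * g2)).1 := by
  set F : M × M → M × M := fun p : M × M => eta (p.1 * p.2) with hF
  have hFeq : ∀ x y : M, F (x, y) = eta (x * y) := fun _ _ => rfl
  set h := c * g2 with hh
  have hh1 : h ≠ 1 := by
    intro h'
    rw [h', lenS_one] at hlen
    omega
  have hbS : b ∈ S := by
    have : s * a ≠ 1 := by
      intro h'
      rw [h', hfac.eta_one] at hsa
      exact hb1 (Prod.ext_iff.mp hsa.symm).1
    have h2 := hfac.head_mem (s * a) this
    rw [hsa] at h2
    exact h2.1
  set d := (eta h).1 with hd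
  set k := (eta h).2 with hk
  have hetah : eta h = (d, k) := rfl
  have t1 : app2 F (s, a, g2) = (s, a, g2) := by
    rw [app2_eq, hFeq, hstb]
  have t2 : app1 F (s, a, g2) = (b, c, g2) := by
    rw [app1_eq, hFeq, hsa]
  have t3 : app2 F (b, c, g2) = (b, d, k) := by
    rw [app2_eq, hFeq, ← hh, hetah]
  have h212 : C212 F (s, a, g2) = (b, d, k) := by
    show app2 F (app1 F (app2 F (s, a, g2))) = _
    rw [t1, t2, t3]
  have h2121 : C2121 F (s, a, g2) = ((eta (b * d)).1, (eta (b * d)).2, k) := by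
    show app1 F (C212 F (s, a, g2)) = _
    rw [h212, app1_eq, hFeq]
  rcases hfac.axm (s, a, g2) with ⟨hA, -⟩ | ⟨-, hB, -⟩
  · rw [h2121, h212] at hA
    have e1 := (Prod.ext_iff.mp hA).1
    have e2 := (Prod.ext_iff.mp (Prod.ext_iff.mp hA).2).1
    unfold Stb
    rw [Prod.ext_iff]
    exact ⟨e1, e2⟩
  · exfalso
    rw [h212] at hB
    have hgh := hfac.geodesic h hh1
    rw [← hd, ← hk] at hgh
    have hlb : lenS S b = 1 := lenS_gen S eta hfac hbS hb1
    have hla : lenS S a = 1 := lenS_gen S eta hfac ha ha1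
    have hls : lenS S s ≤ 1 := lenS_le_one S hs
    simp only [tripLen, hlb, hla] at hB
    omega

/-- Main sweep lemma: sweeping a letter into a normal form either yields a
normal form (when no `1` appears), or fixes the word (when the pair was stable). -/
theorem main_bc (hfac : Factorability S eta) : ∀ n : ℕ, ∀ g s : M, lenS S g ≤ n → s ∈ S →
    ((1 ∉ sweepM eta (s :: NF S eta hfac g) →
        sweepM eta (s :: NF S eta hfac g) = NF S eta hfac (s * g)) ∧
      (eta (s * g) = (s, g) →
        sweepM eta (s :: NF S eta hfac g) = s :: NF S eta hfac g)) := by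
  intro n
  induction n with
  | zero =>
    intro g s hg hs
    have hg1 : g = 1 := eq_one_of_lenS_eq_zero S eta hfac (Nat.le_zero.mp hg)
    subst hg1
    rw [NF_one, sweepM_single]
    constructor
    · intro h1
      have hs1 : s ≠ 1 := fun h => h1 (by rw [h]; exact List.mem_singleton_self 1)
      rw [mul_one, NF_ne S eta hfac hs1, eta_gen S eta hfac hs hs1, NF_one]
    · intro _
      rfl
  | succ n ih =>
    intro g s hg hs
    by_cases hg1 : g = 1
    · subst hg1
      rw [NF_one, sweepM_single]
      constructor
      · intro h1
        have hs1 : s ≠ 1 := fun h => h1 (by rw [h]; exact List.mem_singleton_self 1)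
        rw [mul_one, NF_ne S eta hfac hs1, eta_gen S eta hfac hs hs1, NF_one]
      · intro _
        rfl
    · set a := (eta g).1 with hadef
      set g2 := (eta g).2 with hg2def
      have hNFg : NF S eta hfac g = a :: NF S eta hfac g2 := NF_ne S eta hfac hg1
      have haS : a ∈ S := (hfac.head_mem g hg1).1
      have ha1 : a ≠ 1 := (hfac.head_mem g hg1).2
      have hag2 : a * g2 = g := eta_mul S eta hfac g
      have hstbag : eta (a * g2) = (a, g2) := by rw [hag2]
      have hg2n : lenS S g2 ≤ n := by
        have h1 := hfac.geodesic g hg1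
        rw [lenS_eta1 S eta hfac hg1, ← hg2def] at h1
        omega
      set b := (eta (s * a)).1 with hbdef
      set c := (eta (s * a)).2 with hcdef
      have hsweep : sweepM eta (s :: NF S eta hfac g) =
          b :: sweepM eta (c :: NF S eta hfac g2) := by
        rw [hNFg, sweepM_cons]
      constructor
      · -- case (b): no 1 in the sweep
        intro h1
        rw [hsweep] at h1 ⊢
        have hb1 : b ≠ 1 := fun h => h1 (by rw [h]; exact List.mem_cons_self)
        have h1tail : (1 : M) ∉ sweepM eta (c :: NF S eta hfac g2) :=
          fun h => h1 (List.mem_cons_of_mem _ h)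
        have hsa1 : s * a ≠ 1 := by
          intro h'
          apply hb1
          rw [hbdef, h', hfac.eta_one]
        have hcS : c ∈ S := by
          apply mem_of_lenS_le_one S eta hfac
          have hge := hfac.geodesic (s * a) hsa1
          have hble : lenS S b = 1 := lenS_gen S eta hfac
            (by rw [hbdef]; exact (hfac.head_mem _ hsa1).1) hb1
          have hmul := lenS_mul_le S eta hfac s a
          have hls : lenS S s ≤ 1 := lenS_le_one S hs
          have hla : lenS S a = 1 := lenS_gen S eta hfac haS ha1
          rw [← hbdef, ← hcdef] at hge
          omega
        have htail : sweepM eta (c :: NF S eta hfac g2) = NF S eta hfac (c * g2) :=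
          (ih g2 c hg2n hcS).1 h1tail
        have hlen : lenS S (c * g2) = 1 + lenS S g2 := by
          have e1 : (sweepM eta (c :: NF S eta hfac g2)).length =
              1 + lenS S g2 := by
            rw [sweepM_length]
            simp [NF_length S eta hfac g2, Nat.add_comm]
          rw [htail, NF_length] at e1
          exact e1
        have hsa : eta (s * a) = (b, c) := rfl
        have hstbbd := stb_bd S eta hfac hs haS ha1 hstbag hsa hb1 hlen
        have hh1 : c * g2 ≠ 1 := by
          intro h'
          rw [h', lenS_one] at hlen
          omega
        have hbS : b ∈ S := by
          have := hfac.head_mem (s * a) hsa1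
          rw [hsa] at this
          exact this.1
        have hpre := stb_prepend S eta hfac hbS hb1 hh1 hstbbd
        have hbh : b * (c * g2) = s * g := by
          rw [← mul_assoc, show b * c = s * a from by
            have := hfac.split (s * a) hsa1
            rw [hsa] at this
            exact this, mul_assoc, hag2]
        rw [hbh] at hpre
        have hsg1 : s * g ≠ 1 := by
          intro h'
          rw [h', hfac.eta_one] at hpre
          exact hb1 (Prod.ext_iff.mp hpre.symm).1
        rw [NF_ne S eta hfac hsg1, hpre]
        rw [htail]
      · -- case (c): the pair (s, g) is stable
        intro hstab
        have hsg1 : s * g ≠ 1 := by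
          intro h'
          rw [h', hfac.eta_one] at hstab
          exact hg1 (Prod.ext_iff.mp hstab.symm).2
        have hs1 : s ≠ 1 := by
          intro h'
          have := hfac.head_mem (s * g) hsg1
          rw [hstab] at this
          exact this.2 h'
        have hsa : eta (s * a) = (s, a) := stb_head S eta hfac hs hstab hg1
        have hb : b = s := by rw [hbdef, hsa]
        have hc : c = a := by rw [hcdef, hsa]
        rw [hsweep, hb, hc, hNFg]
        congr 1
        exact (ih g2 a hg2n haS).2 hstbag

theorem NF_chain (hfac : Factorability S eta) (f : M) :
    List.Chain' (Stb eta) (NF S eta hfac f) := by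
  by_cases hf : f = 1
  · rw [hf, NF_one]; exact List.isChain_nil
  · rw [NF_ne S eta hfac hf]
    rw [List.Chain', List.isChain_cons]
    refine ⟨?_, NF_chain hfac (eta f).2⟩
    intro y hy
    by_cases hf2 : (eta f).2 = 1
    · rw [hf2, NF_one] at hy; simp at hy
    · rw [NF_ne S eta hfac hf2] at hy
      simp only [List.head?_cons, Option.mem_def, Option.some.injEq] at hy
      subst hy
      exact stb_head S eta hfac (hfac.head_mem f hf).1 (Stb_eta S eta hfac f) hf2
termination_by lenS S f
decreasing_by exact lenS_eta2_lt S eta hfac hf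

/-- Locally stable words are normal forms. -/
theorem chain_NF (hfac : Factorability S eta) : ∀ l : List M,
    (∀ z ∈ l, z ∈ S ∧ z ≠ 1) → List.Chain' (Stb eta) l →
    NF S eta hfac l.prod = l := by
  intro l
  induction l with
  | nil => intro _ _; simpa using NF_one S eta hfac
  | cons a rest ih =>
    intro hmem hchain
    have haS := (hmem a (List.mem_cons_self)).1
    have ha1 := (hmem a (List.mem_cons_self)).2
    rcases rest with _ | ⟨r0, r'⟩
    · simp only [List.prod_cons, List.prod_nil, mul_one]
      rw [NF_ne S eta hfac ha1, eta_gen S eta hfac haS ha1, NF_one]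
    · have hrest := ih (fun z hz => hmem z (List.mem_cons_of_mem _ hz))
        (List.IsChain.tail hchain)
      have hr1 : (r0 :: r').prod ≠ 1 := by
        intro h'
        rw [h', NF_one] at hrest
        exact List.cons_ne_nil _ _ hrest.symm
      have hhead : (eta ((r0 :: r').prod)).1 = r0 := by
        rw [NF_ne S eta hfac hr1] at hrest
        exact (List.cons.injEq .. ▸ hrest).1
      have hstb : Stb eta a (eta ((r0 :: r').prod)).1 := by
        rw [hhead]
        exact (List.isChain_cons_cons.mp hchain).1
      have hpre := stb_prepend S eta hfac haS ha1 hr1 hstb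
      have hah1 : a * (r0 :: r').prod ≠ 1 := by
        intro h'
        rw [h', hfac.eta_one] at hpre
        exact ha1 (Prod.ext_iff.mp hpre.symm).1
      rw [List.prod_cons, NF_ne S eta hfac hah1, hpre]
      rw [hrest]

end Mlevel3
section Alevel

variable {M : Type*} [Monoid M] {S : Set M} {eta : M → M × M} (hfac : Factorability S eta)
  (e : ↥S) (he : (e : M) = 1) (phi : ↥S × ↥S → ↥S × ↥S)
  (hphi : ∀ p : ↥S × ↥S, (((phi p).1 : M), ((phi p).2 : M)) = eta ((p.1 : M) * (p.2 : M)))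
  (N : List ↥S → List ↥S) (hN : IsNormMap e phi N)

theorem lmap_inj {x y : List ↥S} (h : x.map Subtype.val = y.map Subtype.val) : x = y := by
  exact List.map_injective_iff.mpr Subtype.val_injective h

include hphi in
theorem coe_sweep : ∀ l : List ↥S,
    (sweep phi l).map Subtype.val = sweepM eta (l.map Subtype.val)
  | [] => by rw [sweep_nil]; simp [sweepM, sweep_nil]
  | [a] => by rw [sweep_single]; simp [sweepM, sweep_single]
  | a :: b :: r => by
    rw [sweep_cons]
    simp only [List.map_cons]
    rw [sweepM_cons, coe_sweep ((phi (a, b)).2 :: r)]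
    have h1 := hphi (a, b)
    have e1 : ((phi (a, b)).1 : M) = (eta ((a : M) * (b : M))).1 := by
      rw [← h1]
    have e2 : ((phi (a, b)).2 : M) = (eta ((a : M) * (b : M))).2 := by
      rw [← h1]
    rw [List.map_cons, e1, e2]
termination_by l => l.length

include he in
theorem e_mem_iff {l : List ↥S} : e ∈ l ↔ (1 : M) ∈ l.map Subtype.val := by
  constructor
  · intro h
    rw [← he]
    exact List.mem_map_of_mem h
  · intro h
    obtain ⟨x, hx, hx1⟩ := List.mem_map.mp h
    have : x = e := Subtype.ext (by rw [hx1, he])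
    rwa [this] at hx

include hN in
theorem N_strip_rep : ∀ k : ℕ, ∀ u v : List ↥S,
    N (u ++ List.replicate k e ++ v) = N (u ++ v) := by
  intro k
  induction k with
  | zero => intro u v; simp
  | succ k ih =>
    intro u v
    rw [List.replicate_succ]
    have : u ++ (e :: List.replicate k e) ++ v = u ++ e :: (List.replicate k e ++ v) := by
      simp
    rw [this, hN.2.1 u (List.replicate k e ++ v), ← List.append_assoc, ih]

include hfac in
theorem lenS_prod_le : ∀ l : List M, (∀ x ∈ l, x ∈ S) → lenS S l.prod ≤ l.length := by
  intro l
  induction l with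
  | nil => intro _; simp [lenS_one]
  | cons a r ih =>
    intro hmem
    simp only [List.prod_cons, List.length_cons]
    calc lenS S (a * r.prod) ≤ lenS S a + lenS S r.prod :=
          lenS_mul_le S eta hfac a r.prod
      _ ≤ 1 + r.length := by
          have h1 := lenS_le_one S (hmem a (List.mem_cons_self))
          have h2 := ih (fun x hx => hmem x (List.mem_cons_of_mem _ hx))
          omega
      _ = r.length + 1 := by omega

include he hphi hN in
/-- The fundamental theorem: `N` computes the `eta`-normal form of the product. -/
theorem N_eq_NF : ∀ n : ℕ, ∀ w : List ↥S, w.length ≤ n →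
    (N w).map Subtype.val = NF S eta hfac ((w.map Subtype.val).prod) := by
  intro n
  induction n with
  | zero =>
    intro w hw
    rw [List.length_eq_zero_iff.mp (Nat.le_zero.mp hw)]
    rw [hN.1]
    simp [NF_one]
  | succ n ih =>
    intro w hw
    rcases w with _ | ⟨s, w'⟩
    · rw [hN.1]; simp [NF_one]
    · have hw' : w'.length ≤ n := by
        simp only [List.length_cons] at hw; omega
      have ihw' := ih w' hw'
      set g : M := ((w'.map Subtype.val).prod) with hg
      have hcoesweep : (sweep phi (s :: N w')).map Subtype.val =
          sweepM eta ((s : M) :: NF S eta hfac g) := by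
        rw [coe_sweep phi hphi, List.map_cons, ihw']
      have hNlen : (N w').length = lenS S g := by
        have := congrArg List.length ihw'
        simpa [NF_length] using this
      have hNlen_le : (N w').length ≤ w'.length := by
        rw [hNlen, hg]
        calc lenS S ((w'.map Subtype.val).prod) ≤ (w'.map Subtype.val).length :=
              lenS_prod_le hfac _ (by
                intro x hx
                obtain ⟨y, -, hy⟩ := List.mem_map.mp hx
                rw [← hy]; exact y.2)
          _ = w'.length := by simp
      have hprodgoal : ((List.map Subtype.val (s :: w')).prod) = (s : M) * g := by
        simp [hg]
      by_cases hm : e ∈ sweep phi (s :: N w')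
      · -- recursive case
        have hNeq : N (s :: w') = N (sweep phi (s :: N w')) := (hN.2.2 s w').1 hm
        obtain ⟨v1, v2, hv⟩ := List.append_of_mem hm
        have hstrip : N (sweep phi (s :: N w')) = N (v1 ++ v2) := by
          rw [hv]; exact hN.2.1 v1 v2
        have hlen12 : (v1 ++ v2).length ≤ n := by
          have h1 : (sweep phi (s :: N w')).length = (N w').length + 1 := by
            rw [sweep_length]; simp
          have h2 := congrArg List.length hv
          rw [h1] at h2
          simp only [List.length_append, List.length_cons] at h2 ⊢
          omega
        have ihv := ih (v1 ++ v2) hlen12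
        have hprodv : ((v1 ++ v2).map Subtype.val).prod =
            (((v1 ++ [e] ++ v2).map Subtype.val).prod) := by
          simp [he]
        have hprodv2 : (((v1 ++ [e] ++ v2).map Subtype.val).prod) = (s : M) * g := by
          have : v1 ++ [e] ++ v2 = sweep phi (s :: N w') := by rw [hv]; simp
          rw [this]
          have := congrArg List.prod hcoesweep
          rw [this]
          rw [sweepM_prod S eta hfac]
          simp [NF_prod]
        rw [hNeq, hstrip, ihv, hprodv, hprodv2, hprodgoal]
      · -- terminal case
        have hNeq : N (s :: w') = sweep phi (s :: N w') := (hN.2.2 s w').2 hm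
        have h1mem : (1 : M) ∉ sweepM eta ((s : M) :: NF S eta hfac g) := by
          rw [← hcoesweep]
          intro h
          exact hm ((e_mem_iff e he).mpr h)
        have := (main_bc S eta hfac (lenS S g) g (s : M) le_rfl s.2).1 h1mem
        rw [hNeq, hcoesweep, this, hprodgoal]

end Alevel
section Alevel2

variable {M : Type*} [Monoid M] {S : Set M} {eta : M → M × M} (hfac : Factorability S eta)
  (e : ↥S) (he : (e : M) = 1) (phi : ↥S × ↥S → ↥S × ↥S)
  (hphi : ∀ p : ↥S × ↥S, (((phi p).1 : M), ((phi p).2 : M)) = eta ((p.1 : M) * (p.2 : M)))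
  (N : List ↥S → List ↥S) (hN : IsNormMap e phi N)

include hfac he hphi hN

theorem N_NF (w : List ↥S) :
    (N w).map Subtype.val = NF S eta hfac ((w.map Subtype.val).prod) :=
  N_eq_NF hfac e he phi hphi N hN w.length w le_rfl

theorem N_len (w : List ↥S) : (N w).length = lenS S ((w.map Subtype.val).prod) := by
  have := congrArg List.length (N_NF hfac e he phi hphi N hN w)
  simpa [NF_length] using this

theorem N_len_le (w : List ↥S) : (N w).length ≤ w.length := by
  rw [N_len hfac e he phi hphi N hN w]
  calc lenS S ((w.map Subtype.val).prod) ≤ (w.map Subtype.val).length :=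
        lenS_prod_le hfac _ (by
          intro x hx
          obtain ⟨y, -, hy⟩ := List.mem_map.mp hx
          rw [← hy]; exact y.2)
    _ = w.length := by simp

theorem e_not_mem_N (w : List ↥S) : e ∉ N w := by
  intro h
  have h1 : (1 : M) ∈ (N w).map Subtype.val := (e_mem_iff e he).mp h
  rw [N_NF hfac e he phi hphi N hN w] at h1
  exact (NF_mem S eta hfac h1).2 rfl

theorem N_prod (w : List ↥S) :
    ((N w).map Subtype.val).prod = (w.map Subtype.val).prod := by
  rw [N_NF hfac e he phi hphi N hN w, NF_prod]

/-- Words whose image is a normal form are fixed by `N`. -/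
theorem N_fix : ∀ n : ℕ, ∀ x : List ↥S, ∀ f : M, x.length ≤ n →
    x.map Subtype.val = NF S eta hfac f → N x = x := by
  intro n
  induction n with
  | zero =>
    intro x f hx _
    rw [List.length_eq_zero_iff.mp (Nat.le_zero.mp hx)]
    exact hN.1
  | succ n ih =>
    intro x f hxlen hx
    rcases x with _ | ⟨a, y⟩
    · exact hN.1
    · have hf1 : f ≠ 1 := by
        intro h'
        rw [h', NF_one] at hx
        simp at hx
      rw [NF_ne S eta hfac hf1] at hx
      simp only [List.map_cons, List.cons.injEq] at hx
      obtain ⟨ha, hy⟩ := hx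
      have hNy : N y = y := ih y (eta f).2 (by
        simp only [List.length_cons] at hxlen; omega) hy
      have hstb : eta ((a : M) * (eta f).2) = ((a : M), (eta f).2) := by
        rw [ha]
        exact Stb_eta S eta hfac f
      have hsweepM : sweepM eta ((a : M) :: NF S eta hfac (eta f).2) =
          (a : M) :: NF S eta hfac (eta f).2 :=
        (main_bc S eta hfac (lenS S (eta f).2) (eta f).2 (a : M) le_rfl a.2).2 hstb
      have hcoe : (sweep phi (a :: N y)).map Subtype.val =
          (a :: y).map Subtype.val := by
        rw [hNy, coe_sweep phi hphi]
        simp only [List.map_cons]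
        rw [hy, hsweepM]
      have hsweq : sweep phi (a :: N y) = a :: y := lmap_inj hcoe
      have hem : e ∉ sweep phi (a :: N y) := by
        rw [hsweq]
        intro h
        have h1 : (1 : M) ∈ (a :: y).map Subtype.val := (e_mem_iff e he).mp h
        have h2 : (a :: y).map Subtype.val = NF S eta hfac f := by
          rw [NF_ne S eta hfac hf1, List.map_cons, ha, hy]
        rw [h2] at h1
        exact (NF_mem S eta hfac h1).2 rfl
      have := (hN.2.2 a y).2 hem
      rw [this, hsweq]

theorem N_idem (w : List ↥S) : N (N w) = N w :=
  N_fix hfac e he phi hphi N hN (N w).length (N w) _ le_rfl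
    (N_NF hfac e he phi hphi N hN w)

theorem N_single {a : ↥S} (ha : a ≠ e) : N [a] = [a] := by
  have h0 : sweep phi (a :: N []) = [a] := by rw [hN.1, sweep_single]
  have hem : e ∉ sweep phi (a :: N []) := by
    rw [h0]
    intro h
    exact ha (List.mem_singleton.mp h).symm
  rw [(hN.2.2 a []).2 hem, h0]

end Alevel2
section Alevel3

variable {M : Type*} [Monoid M] {S : Set M} {eta : M → M × M} (hfac : Factorability S eta)
  (e : ↥S) (he : (e : M) = 1) (phi : ↥S × ↥S → ↥S × ↥S)
  (hphi : ∀ p : ↥S × ↥S, (((phi p).1 : M), ((phi p).2 : M)) = eta ((p.1 : M) * (p.2 : M)))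
  (N : List ↥S → List ↥S) (hN : IsNormMap e phi N)
  (N' : List ↥S → List ↥S)
  (hN' : ∀ w : List ↥S, N' w = N w ++ List.replicate (w.length - (N w).length) e)

include he in
theorem coe_eq_e_iff {a : ↥S} : (a : M) = 1 ↔ a = e :=
  ⟨fun h => Subtype.ext (by rw [h, he]), fun h => by rw [h, he]⟩

include hN in
theorem N_cons_e (w : List ↥S) : N (e :: w) = N w := by
  have := hN.2.1 [] w
  simpa using this

include hN in
theorem N_snoc_e (u : List ↥S) : N (u ++ [e]) = N u := by
  have := hN.2.1 u []
  simpa using this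

include hfac he hphi hN hN' in
theorem N'_len (w : List ↥S) : (N' w).length = w.length := by
  rw [hN' w]
  have := N_len_le hfac e he phi hphi N hN w
  simp only [List.length_append, List.length_replicate]
  omega

include hfac he hphi hN hN' in
theorem Npair (a b : ↥S) :
    N' [a, b] = [(phi (a, b)).1, (phi (a, b)).2] := by
  have hpq : (((phi (a, b)).1 : M), ((phi (a, b)).2 : M)) = eta ((a : M) * (b : M)) :=
    hphi (a, b)
  set p := (phi (a, b)).1 with hpd
  set q := (phi (a, b)).2 with hqd
  have hp : (p : M) = (eta ((a : M) * (b : M))).1 := by rw [← hpq]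
  have hq : (q : M) = (eta ((a : M) * (b : M))).2 := by rw [← hpq]
  by_cases hb : b = e
  · have hb1 : (b : M) = 1 := (coe_eq_e_iff e he).mpr hb
    have hab : (a : M) * (b : M) = (a : M) := by rw [hb1, mul_one]
    by_cases ha : a = e
    · have ha1 : (a : M) = 1 := (coe_eq_e_iff e he).mpr ha
      have hN2 : N [a, b] = [] := by
        rw [ha, hb]
        have h1 := hN.2.1 [] [e]
        simp only [List.nil_append] at h1
        rw [h1]
        have h2 := N_cons_e e phi N hN []
        rw [hN.1] at h2
        exact h2
      have hpe : p = e := by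
        rw [← coe_eq_e_iff e he, hp, hab, ha1, hfac.eta_one]
      have hqe : q = e := by
        rw [← coe_eq_e_iff e he, hq, hab, ha1, hfac.eta_one]
      rw [hN' [a, b], hN2, hpe, hqe]
      simp [List.replicate_succ]
    · have ha1 : (a : M) ≠ 1 := fun h => ha ((coe_eq_e_iff e he).mp h)
      have hN2 : N [a, b] = [a] := by
        rw [hb]
        have h1 := N_snoc_e e phi N hN [a]
        simp only [List.singleton_append] at h1
        rw [h1]
        exact N_single hfac e he phi hphi N hN ha
      have heta : eta ((a : M) * (b : M)) = ((a : M), 1) := by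
        rw [hab]
        exact eta_gen S eta hfac a.2 ha1
      have hpa : p = a := Subtype.ext (by rw [hp, heta])
      have hqe : q = e := by
        rw [← coe_eq_e_iff e he, hq, heta]
      rw [hN' [a, b], hN2, hpa, hqe]
      simp [List.replicate_succ]
  · have hNb : N [b] = [b] := N_single hfac e he phi hphi N hN hb
    have hsw : sweep phi (a :: N [b]) = [p, q] := by
      rw [hNb, sweep_cons, ← hpd, ← hqd, sweep_single]
    by_cases hpe : p = e
    · -- then the product is 1 and q = e as well
      have hab1 : (a : M) * (b : M) = 1 := by
        by_contra hab1
        have := (hfac.head_mem _ hab1).2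
        rw [← hp] at this
        exact this (by rw [hpe, he])
      have hqe : q = e := by
        rw [← coe_eq_e_iff e he, hq, hab1, hfac.eta_one]
      have hm : e ∈ sweep phi (a :: N [b]) := by
        rw [hsw, hpe]; exact List.mem_cons_self
      have hN2 : N [a, b] = [] := by
        rw [(hN.2.2 a [b]).1 hm, hsw, hpe, hqe]
        have h1 := hN.2.1 [] [e]
        simp only [List.nil_append] at h1
        rw [h1]
        have h2 := N_cons_e e phi N hN []
        rw [hN.1] at h2
        exact h2
      rw [hN' [a, b], hN2, hpe, hqe]
      simp [List.replicate]
    · by_cases hqe : q = e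
      · have hm : e ∈ sweep phi (a :: N [b]) := by
          rw [hsw, hqe]
          exact List.mem_cons_of_mem _ (List.mem_singleton_self _)
        have hN2 : N [a, b] = [p] := by
          rw [(hN.2.2 a [b]).1 hm, hsw, hqe]
          have h1 := N_snoc_e e phi N hN [p]
          simp only [List.singleton_append] at h1
          rw [h1]
          exact N_single hfac e he phi hphi N hN hpe
        rw [hN' [a, b], hN2, hqe]
        simp [List.replicate]
      · have hm : e ∉ sweep phi (a :: N [b]) := by
          rw [hsw]
          intro h
          rcases List.mem_cons.mp h with h | h
          · exact hpe h.symm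
          · exact hqe (List.mem_singleton.mp h).symm
        have hN2 : N [a, b] = [p, q] := by
          rw [(hN.2.2 a [b]).2 hm, hsw]
        rw [hN' [a, b], hN2]
        simp

end Alevel3
section Alevel4

theorem chain'_iff_splits {A : Type*} {R : A → A → Prop} : ∀ w : List A,
    List.Chain' R w ↔ ∀ (u v : List A) (a b : A), w = u ++ a :: b :: v → R a b := by
  intro w
  induction w with
  | nil =>
    constructor
    · intro _ u v a b h
      exfalso
      have := congrArg List.length h
      simp at this
    · intro _; exact List.isChain_nil
  | cons x t ih =>
    constructor
    · intro hch u v a b h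
      rcases u with _ | ⟨c, u'⟩
      · simp only [List.nil_append, List.cons.injEq] at h
        obtain ⟨rfl, rfl⟩ := h
        exact (List.isChain_cons_cons.mp hch).1
      · simp only [List.cons_append, List.cons.injEq] at h
        exact (ih.mp hch.tail) u' v a b h.2
    · intro hsp
      rcases t with _ | ⟨y, t'⟩
      · exact List.isChain_singleton x
      · rw [List.Chain', List.isChain_cons_cons]
        exact ⟨hsp [] t' x y rfl,
          ih.mpr (fun u v a b h => hsp (x :: u) v a b (by rw [h]; rfl))⟩

theorem chain'_replicate {A : Type*} {R : A → A → Prop} {e : A} (hR : R e e) :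
    ∀ k : ℕ, List.Chain' R (List.replicate k e) := by
  intro k
  induction k with
  | zero => exact List.isChain_nil
  | succ k ih =>
    rw [List.replicate_succ, List.Chain', List.isChain_cons]
    refine ⟨?_, ih⟩
    intro y hy
    rcases k with _ | k
    · simp at hy
    · rw [List.replicate_succ] at hy
      simp only [List.head?_cons, Option.mem_def, Option.some.injEq] at hy
      rw [← hy]
      exact hR

variable {M : Type*} [Monoid M] {S : Set M} {eta : M → M × M} (hfac : Factorability S eta)
  (e : ↥S) (he : (e : M) = 1) (phi : ↥S × ↥S → ↥S × ↥S)
  (hphi : ∀ p : ↥S × ↥S, (((phi p).1 : M), ((phi p).2 : M)) = eta ((p.1 : M) * (p.2 : M)))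
  (N : List ↥S → List ↥S) (hN : IsNormMap e phi N)
  (N' : List ↥S → List ↥S)
  (hN' : ∀ w : List ↥S, N' w = N w ++ List.replicate (w.length - (N w).length) e)

include hfac he hphi hN hN'

theorem N'_letter (a : ↥S) : N' [a] = [a] := by
  by_cases ha : a = e
  · have h1 : N [a] = [] := by
      rw [ha]
      have h2 := N_cons_e e phi N hN []
      rw [hN.1] at h2
      exact h2
    rw [hN' [a], h1, ha]
    simp
  · rw [hN' [a], N_single hfac e he phi hphi N hN ha]
    simp

theorem pair_iff (a b : ↥S) :
    N' [a, b] = [a, b] ↔ eta ((a : M) * (b : M)) = ((a : M), (b : M)) := by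
  have hpq : (((phi (a, b)).1 : M), ((phi (a, b)).2 : M)) = eta ((a : M) * (b : M)) :=
    hphi (a, b)
  rw [Npair hfac e he phi hphi N hN N' hN' a b]
  constructor
  · intro h
    simp only [List.cons.injEq, and_true] at h
    rw [← hpq, h.1, h.2]
  · intro h
    rw [h] at hpq
    have h1 : (phi (a, b)).1 = a := Subtype.ext (by
      have := congrArg Prod.fst hpq
      simpa using this)
    have h2 : (phi (a, b)).2 = b := Subtype.ext (by
      have := congrArg Prod.snd hpq
      simpa using this)
    rw [h1, h2]

theorem not_pair_e {b : ↥S} (hb : b ≠ e) : N' [e, b] ≠ [e, b] := by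
  have hpq : (((phi (e, b)).1 : M), ((phi (e, b)).2 : M)) = eta ((e : M) * (b : M)) :=
    hphi (e, b)
  have hb1 : (b : M) ≠ 1 := fun h => hb ((coe_eq_e_iff e he).mp h)
  have heta : eta ((e : M) * (b : M)) = ((b : M), 1) := by
    rw [he, one_mul]
    exact eta_gen S eta hfac b.2 hb1
  rw [heta] at hpq
  have h1 : (phi (e, b)).1 = b := Subtype.ext (by
    have := congrArg Prod.fst hpq
    simpa using this)
  have h2 : (phi (e, b)).2 = e := Subtype.ext (by
    have := congrArg Prod.snd hpq
    rw [he]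
    simpa using this)
  rw [Npair hfac e he phi hphi N hN N' hN' e b, h1, h2]
  intro h
  simp only [List.cons.injEq, and_true] at h
  exact hb h.1

/-- Normality in terms of the chain condition. -/
theorem Nfixed_chain {w : List ↥S} (h : N' w = w) :
    List.Chain' (fun a b => N' [a, b] = [a, b]) w := by
  rw [← h, hN' w]
  rw [List.Chain', List.isChain_append]
  refine ⟨?_, ?_, ?_⟩
  · -- chain on N w
    have hchainM : List.Chain' (Stb eta)
        ((N w).map Subtype.val) := by
      rw [N_NF hfac e he phi hphi N hN w]
      exact NF_chain S eta hfac _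
    rw [List.Chain', List.isChain_map] at hchainM
    exact hchainM.imp (fun a b hab => (pair_iff hfac e he phi hphi N hN N' hN' a b).mpr hab)
  · exact chain'_replicate (R := fun a b => N' [a, b] = [a, b])
      ((pair_iff hfac e he phi hphi N hN N' hN' e e).mpr (by
        rw [he, one_mul, hfac.eta_one])) _
  · intro x hx y hy
    have hxN : x ∈ N w := List.mem_of_mem_getLast? hx
    have hxe : x ≠ e := fun h' => e_not_mem_N hfac e he phi hphi N hN w (h' ▸ hxN)
    have hx1 : (x : M) ≠ 1 := fun h' => hxe ((coe_eq_e_iff e he).mp h')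
    have hye : y = e := by
      rcases Nat.eq_zero_or_pos (w.length - (N w).length) with h0 | h0
      · rw [h0] at hy; simp at hy
      · obtain ⟨k, hk⟩ := Nat.exists_eq_succ_of_ne_zero (Nat.pos_iff_ne_zero.mp h0)
        rw [hk, List.replicate_succ] at hy
        simp only [List.head?_cons, Option.mem_def, Option.some.injEq] at hy
        exact hy.symm
    rw [hye]
    refine (pair_iff hfac e he phi hphi N hN N' hN' x e).mpr ?_
    rw [he, mul_one]
    exact eta_gen S eta hfac x.2 hx1

theorem chain_decomp {w : List ↥S}
    (h : List.Chain' (fun a b => N' [a, b] = [a, b]) w) :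
    ∃ (x : List ↥S) (k : ℕ), w = x ++ List.replicate k e ∧ e ∉ x := by
  induction w with
  | nil => exact ⟨[], 0, by simp, by simp⟩
  | cons a w' ih =>
    obtain ⟨x, k, hw', hx⟩ := ih h.tail
    by_cases ha : a = e
    · rcases x with _ | ⟨x0, x'⟩
      · refine ⟨[], k + 1, ?_, by simp⟩
        rw [List.replicate_succ, ha, hw']
        simp
      · exfalso
        have hx0 : x0 ≠ e := fun h' => hx (h' ▸ List.mem_cons_self)
        have hR := (List.isChain_cons.mp h).1 x0 (by
          rw [hw']
          simp)
        rw [ha] at hR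
        exact not_pair_e hfac e he phi hphi N hN N' hN' hx0 hR
    · exact ⟨a :: x, k, by rw [hw']; simp, by
        intro h'
        rcases List.mem_cons.mp h' with h' | h'
        · exact ha h'.symm
        · exact hx h'⟩

theorem chain_fix {x : List ↥S} (hx : e ∉ x)
    (h : List.Chain' (fun a b => N' [a, b] = [a, b]) x) : N x = x := by
  have hmem : ∀ z ∈ x.map Subtype.val, z ∈ S ∧ z ≠ 1 := by
    intro z hz
    obtain ⟨y, hy, rfl⟩ := List.mem_map.mp hz
    refine ⟨y.2, fun h1 => hx ?_⟩
    have : y = e := (coe_eq_e_iff e he).mp h1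
    rwa [this] at hy
  have hchainM : List.Chain' (Stb eta) (x.map Subtype.val) := by
    rw [List.Chain', List.isChain_map]
    exact h.imp (fun a b hab => (pair_iff hfac e he phi hphi N hN N' hN' a b).mp hab)
  have := chain_NF S eta hfac (x.map Subtype.val) hmem hchainM
  exact N_fix hfac e he phi hphi N hN x.length x _ le_rfl this.symm

theorem N'_normal_iff (w : List ↥S) : N' w = w ↔
    ∀ (u v : List ↥S) (a b : ↥S), w = u ++ a :: b :: v → N' [a, b] = [a, b] := by
  constructor
  · intro h
    exact (chain'_iff_splits w).mp (Nfixed_chain hfac e he phi hphi N hN N' hN' h)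
  · intro hsp
    have hchain := (chain'_iff_splits w).mpr hsp
    obtain ⟨x, k, hw, hx⟩ := chain_decomp hfac e he phi hphi N hN N' hN' hchain
    have hchx : List.Chain' (fun a b => N' [a, b] = [a, b]) x := by
      rw [hw] at hchain
      exact (List.isChain_append.mp hchain).1
    have hNx : N x = x := chain_fix hfac e he phi hphi N hN N' hN' hx hchx
    have hNw : N w = x := by
      rw [hw]
      have h1 := N_strip_rep e phi N hN k x []
      simp only [List.append_nil] at h1
      rw [h1, hNx]
    rw [hN' w, hNw, hw]
    have hlen : (x ++ List.replicate k e).length - x.length = k := by simp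
    rw [hlen]

theorem N'_mid (u v w : List ↥S) : N' (u ++ v ++ w) = N' (u ++ N' v ++ w) := by
  have hlen : (u ++ N' v ++ w).length = (u ++ v ++ w).length := by
    simp [N'_len hfac e he phi hphi N hN N' hN' v]
  have hstep1 : N (u ++ N' v ++ w) = N (u ++ N v ++ w) := by
    rw [hN' v]
    have h1 := N_strip_rep e phi N hN (v.length - (N v).length) (u ++ N v) w
    have h2 : u ++ (N v ++ List.replicate (v.length - (N v).length) e) ++ w
        = u ++ N v ++ List.replicate (v.length - (N v).length) e ++ w := by
      simp [List.append_assoc]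
    rw [h2, h1]
  have hstep2 : N (u ++ N v ++ w) = N (u ++ v ++ w) := by
    apply lmap_inj
    rw [N_NF hfac e he phi hphi N hN, N_NF hfac e he phi hphi N hN]
    congr 1
    simp only [List.map_append, List.prod_append]
    rw [N_prod hfac e he phi hphi N hN v]
  rw [hN' (u ++ v ++ w), hN' (u ++ N' v ++ w), hstep1, hstep2, hlen]

end Alevel4
section Alevel5

theorem applySeq_nil {A : Type*} (Nf : List A → List A) (w : List A) :
    applySeq Nf [] w = w := rfl

theorem applySeq_cons {A : Type*} (Nf : List A → List A) (i : ℕ) (pos : List ℕ)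
    (w : List A) : applySeq Nf (i :: pos) w = applySeq Nf pos (applyAt Nf i w) := rfl

theorem applySeq_append {A : Type*} (Nf : List A → List A) (p q : List ℕ) (w : List A) :
    applySeq Nf (p ++ q) w = applySeq Nf q (applySeq Nf p w) :=
  List.foldl_append ..

theorem applyAt_one {A : Type*} (Nf : List A → List A) (a b : A) (r : List A) :
    applyAt Nf 1 (a :: b :: r) = Nf [a, b] ++ r := by
  simp [applyAt]

theorem applyAt_shift {A : Type*} (Nf : List A → List A) (j : ℕ) (s : A) (v : List A) :
    applyAt Nf (j + 2) (s :: v) = s :: applyAt Nf (j + 1) v := by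
  unfold applyAt
  have e1 : j + 2 - 1 = j + 1 := rfl
  have e2 : j + 1 - 1 = j := rfl
  rw [e1, e2, List.take_succ_cons, List.drop_succ_cons]
  have e3 : j + 2 + 1 = (j + 1 + 1) + 1 := rfl
  rw [e3, List.drop_succ_cons]
  simp

theorem applySeq_shift {A : Type*} (Nf : List A → List A) (s : A) :
    ∀ pos : List ℕ, (∀ i ∈ pos, 1 ≤ i) → ∀ v : List A,
    applySeq Nf (pos.map (· + 1)) (s :: v) = s :: applySeq Nf pos v := by
  intro pos
  induction pos with
  | nil => intro _ v; rfl
  | cons i pos ih =>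
    intro hpos v
    rw [List.map_cons, applySeq_cons, applySeq_cons]
    obtain ⟨j, rfl⟩ : ∃ j, i = j + 1 :=
      ⟨i - 1, by have := hpos i (List.mem_cons_self); omega⟩
    rw [show j + 1 + 1 = j + 2 from rfl, applyAt_shift]
    exact ih (fun i hi => hpos i (List.mem_cons_of_mem _ hi)) _

variable {M : Type*} [Monoid M] {S : Set M} {eta : M → M × M} (hfac : Factorability S eta)
  (e : ↥S) (he : (e : M) = 1) (phi : ↥S × ↥S → ↥S × ↥S)
  (hphi : ∀ p : ↥S × ↥S, (((phi p).1 : M), ((phi p).2 : M)) = eta ((p.1 : M) * (p.2 : M)))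
  (N : List ↥S → List ↥S) (hN : IsNormMap e phi N)
  (N' : List ↥S → List ↥S)
  (hN' : ∀ w : List ↥S, N' w = N w ++ List.replicate (w.length - (N w).length) e)

include hfac he hphi in
theorem phi_right_e (c : ↥S) : phi (c, e) = (c, e) := by
  have hpq := hphi (c, e)
  have heta : eta ((c : M) * (e : M)) = ((c : M), 1) := by
    rw [he, mul_one]
    by_cases hc : (c : M) = 1
    · rw [hc, hfac.eta_one]
    · exact eta_gen S eta hfac c.2 hc
  rw [heta] at hpq
  have h1 : (phi (c, e)).1 = c := Subtype.ext (by
    have := congrArg Prod.fst hpq; simpa using this)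
  have h2 : (phi (c, e)).2 = e := Subtype.ext (by
    have := congrArg Prod.snd hpq; rw [he]; simpa using this)
  rw [Prod.ext_iff]
  exact ⟨by rw [h1], by rw [h2]⟩

include hfac he hphi in
theorem phi_left_e (c : ↥S) : phi (e, c) = (c, e) := by
  have hpq := hphi (e, c)
  have heta : eta ((e : M) * (c : M)) = ((c : M), 1) := by
    rw [he, one_mul]
    by_cases hc : (c : M) = 1
    · rw [hc, hfac.eta_one]
    · exact eta_gen S eta hfac c.2 hc
  rw [heta] at hpq
  have h1 : (phi (e, c)).1 = c := Subtype.ext (by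
    have := congrArg Prod.fst hpq; simpa using this)
  have h2 : (phi (e, c)).2 = e := Subtype.ext (by
    have := congrArg Prod.snd hpq; rw [he]; simpa using this)
  rw [Prod.ext_iff]
  exact ⟨by rw [h1], by rw [h2]⟩

include hfac he hphi in
theorem sweep_snoc_e : ∀ l : List ↥S, l ≠ [] →
    sweep phi (l ++ [e]) = sweep phi l ++ [e]
  | [], h => absurd rfl h
  | [a], _ => by
    rw [List.singleton_append, sweep_cons, phi_right_e hfac e he phi hphi a,
      sweep_single, sweep_single]
    rfl
  | a :: b :: r, _ => by
    rw [List.cons_append, List.cons_append, sweep_cons, sweep_cons]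
    rw [← List.cons_append,
      sweep_snoc_e ((phi (a, b)).2 :: r) (List.cons_ne_nil _ _)]
    simp
termination_by l => l.length

include hfac he hphi in
theorem sweep_snoc_rep : ∀ k : ℕ, ∀ l : List ↥S, l ≠ [] →
    sweep phi (l ++ List.replicate k e) = sweep phi l ++ List.replicate k e := by
  intro k
  induction k with
  | zero => intro l _; simp
  | succ k ih =>
    intro l hl
    have h1 : l ++ List.replicate (k + 1) e = (l ++ List.replicate k e) ++ [e] := by
      rw [List.replicate_succ', ← List.append_assoc]
    rw [h1, sweep_snoc_e hfac e he phi hphi (l ++ List.replicate k e) (by simp [hl]),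
      ih l hl]
    rw [List.replicate_succ' (n := k) (a := e)]
    simp [List.append_assoc]

include hfac he hphi in
theorem sweep_e_cons : ∀ x : List ↥S, sweep phi (e :: x) = x ++ [e]
  | [] => by rw [sweep_single]; rfl
  | c :: r => by
    rw [sweep_cons, phi_left_e hfac e he phi hphi c]
    rw [sweep_e_cons r]
    simp
termination_by x => x.length

include hfac he hphi hN hN' in
theorem sweep_sim : ∀ l : List ↥S, ∃ pos : List ℕ,
    (∀ i ∈ pos, 1 ≤ i) ∧ applySeq N' pos l = sweep phi l
  | [] => ⟨[], by simp, by rw [sweep_nil]; rfl⟩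
  | [a] => ⟨[], by simp, by rw [sweep_single]; rfl⟩
  | a :: b :: r => by
    obtain ⟨pos, h1, h2⟩ := sweep_sim ((phi (a, b)).2 :: r)
    refine ⟨1 :: pos.map (· + 1), ?_, ?_⟩
    · intro i hi
      rcases List.mem_cons.mp hi with h | h
      · omega
      · obtain ⟨j, hj, rfl⟩ := List.mem_map.mp h
        omega
    · rw [sweep_cons, applySeq_cons, applyAt_one,
        Npair hfac e he phi hphi N hN N' hN' a b]
      rw [List.cons_append, List.singleton_append]
      rw [applySeq_shift N' ((phi (a, b)).1) pos h1 ((phi (a, b)).2 :: r), h2]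
termination_by l => l.length

open Classical in
/-- The number of letters different from `e`. -/
noncomputable def cnt (e : ↥S) (l : List ↥S) : ℕ := (l.filter (fun a => a ≠ e)).length

theorem cnt_nil : cnt e [] = 0 := rfl

open Classical in
theorem cnt_cons (a : ↥S) (l : List ↥S) :
    cnt e (a :: l) = if a = e then cnt e l else cnt e l + 1 := by
  unfold cnt
  by_cases h : a = e
  · simp [h, List.filter_cons]
  · simp [h, List.filter_cons]

theorem cnt_le_length (l : List ↥S) : cnt e l ≤ l.length :=
  List.length_filter_le _ _

theorem cnt_tail_le (a : ↥S) (l : List ↥S) : cnt e l ≤ cnt e (a :: l) := by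
  rw [cnt_cons]
  split <;> omega

theorem cnt_append (l1 l2 : List ↥S) : cnt e (l1 ++ l2) = cnt e l1 + cnt e l2 := by
  unfold cnt
  rw [List.filter_append, List.length_append]

theorem cnt_rep (k : ℕ) : cnt e (List.replicate k e) = 0 := by
  induction k with
  | zero => rfl
  | succ k ih =>
    rw [List.replicate_succ, cnt_cons]
    simpa using ih

theorem cnt_lt_of_mem {l : List ↥S} (h : e ∈ l) : cnt e l < l.length := by
  induction l with
  | nil => simp at h
  | cons a r ih =>
    rw [cnt_cons, List.length_cons]
    by_cases ha : a = e
    · have := cnt_le_length e r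
      simp only [ha, if_true]
      omega
    · have hm : e ∈ r := by
        rcases List.mem_cons.mp h with h' | h'
        · exact absurd h'.symm ha
        · exact h'
      have := ih hm
      simp only [ha, if_false]
      omega

include hfac he in
theorem lenS_le_cnt : ∀ l : List ↥S, lenS S ((l.map Subtype.val).prod) ≤ cnt e l := by
  intro l
  induction l with
  | nil => simp [lenS_one]
  | cons a r ih =>
    rw [cnt_cons]
    simp only [List.map_cons, List.prod_cons]
    by_cases ha : a = e
    · rw [ha, he, one_mul]
      simp only [if_true, ha]
      simpa [ha] using ih
    · simp only [ha, if_false]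
      calc lenS S ((a : M) * (r.map Subtype.val).prod)
          ≤ lenS S (a : M) + lenS S ((r.map Subtype.val).prod) :=
            lenS_mul_le S eta hfac _ _
        _ ≤ 1 + cnt e r := by
            have := lenS_le_one S a.2
            omega
        _ = cnt e r + 1 := by omega

include hfac he hphi hN hN' in
theorem reach_aux : ∀ c : ℕ, ∀ n : ℕ, ∀ w : List ↥S, cnt e w ≤ c → w.length ≤ n →
    ∃ pos : List ℕ, (∀ i ∈ pos, 1 ≤ i) ∧ applySeq N' pos w = N' w := by
  intro c
  induction c using Nat.strong_induction_on with
  | _ c ihc =>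
  intro n
  induction n with
  | zero =>
    intro w _ hn
    rw [List.length_eq_zero_iff.mp (Nat.le_zero.mp hn)]
    refine ⟨[], by simp, ?_⟩
    rw [applySeq_nil, hN' [], hN.1]
    simp
  | succ n ihn =>
    intro w hc hn
    rcases w with _ | ⟨s, u⟩
    · refine ⟨[], by simp, ?_⟩
      rw [applySeq_nil, hN' [], hN.1]
      simp
    · -- step 1 : reach s :: N' u
      obtain ⟨pos_u, hpos_u, hru⟩ := ihn u
        (le_trans (cnt_tail_le e s u) hc) (by
          simp only [List.length_cons] at hn
          omega)
      have hshift : applySeq N' (pos_u.map (· + 1)) (s :: u) = s :: N' u := by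
        rw [applySeq_shift N' s pos_u hpos_u u, hru]
      -- step 2 : sweep
      obtain ⟨pos_s, hpos_s, hrs⟩ := sweep_sim hfac e he phi hphi N hN N' hN' (s :: N' u)
      set x := N u with hx
      set k := u.length - x.length with hk
      have hxlen : x.length ≤ u.length := N_len_le hfac e he phi hphi N hN u
      have hN'u : N' u = x ++ List.replicate k e := hN' u
      have hsw : sweep phi (s :: N' u) = sweep phi (s :: x) ++ List.replicate k e := by
        rw [hN'u, ← List.cons_append]
        exact sweep_snoc_rep hfac e he phi hphi k (s :: x) (List.cons_ne_nil _ _)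
      have hy0len : (sweep phi (s :: x)).length = x.length + 1 := by
        rw [sweep_length]; simp
      by_cases hm : e ∈ sweep phi (s :: x)
      · by_cases hs : s = e
        · -- direct case: s = e
          have hsweepe : sweep phi (s :: x) = x ++ [e] := by
            rw [hs]; exact sweep_e_cons hfac e he phi hphi x
          have hNw : N (s :: u) = x := by
            rw [hs, N_cons_e e phi N hN u]
          refine ⟨pos_u.map (· + 1) ++ pos_s, ?_, ?_⟩
          · intro i hi
            rcases List.mem_append.mp hi with h | h
            · obtain ⟨j, hj, rfl⟩ := List.mem_map.mp h; omega
            · exact hpos_s i h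
          · rw [applySeq_append, hshift, hrs, hsw, hsweepe]
            rw [hN' (s :: u), hNw]
            have : (s :: u).length - x.length = k + 1 := by
              simp only [List.length_cons]; omega
            rw [this, List.replicate_succ, List.append_assoc]
            simp
        · -- recursive case on y
          set y := sweep phi (s :: x) ++ List.replicate k e with hy
          have hcw : cnt e (s :: u) = cnt e u + 1 := by
            rw [cnt_cons]; simp [hs]
          have hcy : cnt e y < c := by
            have h1 : cnt e (sweep phi (s :: x)) < x.length + 1 := by
              rw [← hy0len]
              exact cnt_lt_of_mem e hm
            have h2 : x.length ≤ cnt e u := by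
              rw [hx, N_len hfac e he phi hphi N hN u]
              exact lenS_le_cnt hfac e he u
            rw [hy, cnt_append, cnt_rep]
            omega
          obtain ⟨pos_y, hpos_y, hry⟩ := ihc (cnt e y) hcy y.length y le_rfl le_rfl
          have hNweq : N (s :: u) = N y := by
            have h1 : N (s :: u) = N (sweep phi (s :: N u)) := (hN.2.2 s u).1 (by
              rw [← hx]; exact hm)
            rw [h1, ← hx]
            have h2 := N_strip_rep e phi N hN k (sweep phi (s :: x)) []
            simp only [List.append_nil] at h2
            rw [hy, h2]
          have hylen : y.length = (s :: u).length := by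
            rw [hy]
            simp only [List.length_append, List.length_replicate, hy0len,
              List.length_cons]
            omega
          have hN'eq : N' y = N' (s :: u) := by
            rw [hN' y, hN' (s :: u), hNweq, hylen]
          refine ⟨pos_u.map (· + 1) ++ pos_s ++ pos_y, ?_, ?_⟩
          · intro i hi
            rcases List.mem_append.mp hi with h | h
            · rcases List.mem_append.mp h with h' | h'
              · obtain ⟨j, hj, rfl⟩ := List.mem_map.mp h'; omega
              · exact hpos_s i h'
            · exact hpos_y i h
          · rw [applySeq_append, applySeq_append, hshift, hrs, hsw, hry, hN'eq]
      · -- terminal case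
        have hNw : N (s :: u) = sweep phi (s :: x) := by
          rw [hx]
          exact (hN.2.2 s u).2 (by rw [← hx]; exact hm)
        refine ⟨pos_u.map (· + 1) ++ pos_s, ?_, ?_⟩
        · intro i hi
          rcases List.mem_append.mp hi with h | h
          · obtain ⟨j, hj, rfl⟩ := List.mem_map.mp h; omega
          · exact hpos_s i h
        · rw [applySeq_append, hshift, hrs, hsw]
          rw [hN' (s :: u), hNw]
          have : (s :: u).length - (sweep phi (s :: x)).length = k := by
            rw [hy0len]
            simp only [List.length_cons]
            omega
          rw [this]

end Alevel5
/-- if `(M, S, η)` is a factorable monoid, then the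
length-preserving extension `N'` of the normalisation map `N = N_phi` associated
to the local factorability structure `phi = (ημ)|_{S²}` is a quadratic
normalisation on the alphabet `S`. -/
theorem factorable_gives_quadratic {M : Type*} [Monoid M] (S : Set M)
    (eta : M → M × M) (hfac : Factorability S eta)
    (e : ↥S) (he : (e : M) = 1)
    (phi : ↥S × ↥S → ↥S × ↥S)
    (hphi : ∀ p : ↥S × ↥S, (((phi p).1 : M), ((phi p).2 : M)) = eta ((p.1 : M) * (p.2 : M)))
    (N : List ↥S → List ↥S) (hN : IsNormMap e phi N)
    (N' : List ↥S → List ↥S)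
    (hN' : ∀ w : List ↥S, N' w = N w ++ List.replicate (w.length - (N w).length) e) :
    QuadraticNormalisation N' := by
  refine ⟨N'_len hfac e he phi hphi N hN N' hN',
    N'_letter hfac e he phi hphi N hN N' hN',
    N'_mid hfac e he phi hphi N hN N' hN',
    N'_normal_iff hfac e he phi hphi N hN N' hN',
    fun w => ?_⟩
  obtain ⟨pos, -, h⟩ := reach_aux hfac e he phi hphi N hN N' hN'
    (cnt e w) w.length w le_rfl le_rfl
  exact ⟨pos, h.symm⟩
end

section
/- Let (A, N) be a quadratic normalisation with N-neutral element e such that the weak domino rule is valid for N̄ (i.e. the domino rule can fail only when the upper-right part of the domino diagram contains e). Then (A, N) is of class (5,4). -/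
/-- The weak domino rule: the domino rule may fail only when the upper-right
part of the domino diagram (i.e. one of `s1'`, `s2'`, `t1`, `t2`) contains `e`. -/
def WeakDominoRule {A : Type*} (N : List A → List A) (e : A) : Prop :=
  ∀ s1 s2 s1' s2' t0 t1 t2 : A,
    s1' ≠ e → s2' ≠ e → t1 ≠ e → t2 ≠ e →
    N [t0, s1] = [s1', t1] → N [t1, s2] = [s2', t2] →
    N [s1, s2] = [s1, s2] → N [s1', t1] = [s1', t1] → N [s2', t2] = [s2', t2] →
    N [s1', s2'] = [s1', s2']

section

variable {A : Type*} {N : List A → List A}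

lemma applyAt_one_triple (N : List A → List A) (x y z : A) :
    applyAt N 1 [x, y, z] = N [x, y] ++ [z] := by
  simp [applyAt]

lemma applyAt_two_triple (N : List A → List A) (x y z : A) :
    applyAt N 2 [x, y, z] = x :: N [y, z] := by
  simp [applyAt]

namespace QuadraticNormalisation

variable (hN : QuadraticNormalisation N)
include hN

lemma idem (w : List A) : N (N w) = N w := by
  simpa using (hN.mid [] w []).symm

lemma exists_eq_pair (a b : A) : ∃ c d, N [a, b] = [c, d] :=
  List.length_eq_two.mp (by simpa using hN.len [a, b])

lemma normal_of_eq_pair {a b c d : A} (h : N [a, b] = [c, d]) : N [c, d] = [c, d] := by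
  simpa [h] using hN.idem [a, b]

lemma normal_triple {x y z : A} (hxy : N [x, y] = [x, y]) (hyz : N [y, z] = [y, z]) :
    N [x, y, z] = [x, y, z] := by
  rw [hN.normal_iff]
  rintro u v a b huv
  rcases u with _ | ⟨a₁, _ | ⟨a₂, _ | ⟨a₃, u⟩⟩⟩ <;> simp_all

lemma map_triple_of_left {x y z c d : A} (h : N [x, y] = [c, d]) :
    N [x, y, z] = N [c, d, z] := by
  simpa [h] using hN.mid [] [x, y] [z]

lemma map_triple_of_right {x y z c d : A} (h : N [y, z] = [c, d]) :
    N [x, y, z] = N [x, c, d] := by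
  simpa [h] using hN.mid [x] [y, z] []

lemma leftClass_succ_of_rightClass {n : ℕ} (h : RightClass N n) : LeftClass N (n + 1) := by
  intro w hw
  obtain ⟨x, y, z, rfl⟩ := List.length_eq_three.mp hw
  obtain ⟨c, d, hxy⟩ := hN.exists_eq_pair x y
  change N [x, y, z] = applySeq N (altSeq 2 n) (applyAt N 1 [x, y, z])
  rw [applyAt_one_triple, hxy, hN.map_triple_of_left hxy]
  exact h [c, d, z] rfl

end QuadraticNormalisation

namespace Neutral

variable {e : A} (he : Neutral N e)
include he

lemma map_pair_right (hN : QuadraticNormalisation N) (a : A) : N [a, e] = [a, e] := by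
  simpa [hN.letter] using (he [a]).1

lemma map_pair_left (hN : QuadraticNormalisation N) (a : A) : N [e, a] = [a, e] := by
  simpa [hN.letter] using (he [a]).2

lemma ne_of_map_pair (hN : QuadraticNormalisation N) {a b c d : A} (h : N [a, b] = [c, d])
    (hd : d ≠ e) : a ≠ e := by
  rintro rfl
  rw [he.map_pair_left hN] at h
  exact hd (List.cons_eq_cons.mp (List.cons_eq_cons.mp h).2).1.symm

end Neutral

section WeakDomino

variable {e : A} (hN : QuadraticNormalisation N) (he : Neutral N e) (hwd : WeakDominoRule N e)
include hN he hwd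

lemma WeakDominoRule.normal_corner {t₀ s₁ s₂ s₁' t₁ s₂' t₂ p q : A}
    (h₁ : N [s₁, s₂] = [s₁, s₂]) (h₂ : N [t₀, s₁] = [s₁', t₁]) (h₃ : N [t₁, s₂] = [s₂', t₂])
    (h₄ : N [s₁', s₂'] = [p, q]) : N [q, t₂] = [q, t₂] := by
  by_cases ht₂ : t₂ = e
  · subst ht₂
    exact he.map_pair_right hN q
  have hs₂'t₂ := hN.normal_of_eq_pair h₃
  have hs₁'t₁ := hN.normal_of_eq_pair h₂
  have ht₁ := he.ne_of_map_pair hN h₃ ht₂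
  have hs₂' := he.ne_of_map_pair hN hs₂'t₂ ht₂
  have hs₁' := he.ne_of_map_pair hN hs₁'t₁ ht₁
  have hdomino := hwd s₁ s₂ s₁' s₂' t₀ t₁ t₂ hs₁' hs₂' ht₁ ht₂ h₂ h₃ h₁ hs₁'t₁ hs₂'t₂
  obtain ⟨-, rfl⟩ : s₁' = p ∧ s₂' = q := by simpa [hdomino] using h₄
  exact hs₂'t₂

lemma WeakDominoRule.rightClass_four : RightClass N 4 := by
  intro w hw
  obtain ⟨x, y, z, rfl⟩ := List.length_eq_three.mp hw
  obtain ⟨s₁, s₂, h₁⟩ := hN.exists_eq_pair y z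
  obtain ⟨s₁', t₁, h₂⟩ := hN.exists_eq_pair x s₁
  obtain ⟨s₂', t₂, h₃⟩ := hN.exists_eq_pair t₁ s₂
  obtain ⟨p, q, h₄⟩ := hN.exists_eq_pair s₁' s₂'
  have hseq : applySeq N (altSeq 2 4) [x, y, z] = [p, q, t₂] := by
    change applyAt N 1 (applyAt N 2 (applyAt N 1 (applyAt N 2 [x, y, z]))) = _
    rw [applyAt_two_triple, h₁, applyAt_one_triple, h₂]
    change applyAt N 1 (applyAt N 2 [s₁', t₁, s₂]) = _
    rw [applyAt_two_triple, h₃, applyAt_one_triple, h₄]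
    rfl
  have hnormal : N [p, q, t₂] = [p, q, t₂] :=
    hN.normal_triple (hN.normal_of_eq_pair h₄)
      (hwd.normal_corner hN he (hN.normal_of_eq_pair h₁) h₂ h₃ h₄)
  rw [hseq, hN.map_triple_of_right h₁, hN.map_triple_of_left h₂, hN.map_triple_of_right h₃,
    hN.map_triple_of_left h₄, hnormal]

end WeakDomino

end

/-- a quadratic normalisation with an `N`-neutral element `e` for
which the weak domino rule is valid is of class `(5,4)`. -/
theorem weakDomino_implies_class54 {A : Type*} (N : List A → List A)
    (hN : QuadraticNormalisation N) (e : A) (he : Neutral N e)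
    (hwd : WeakDominoRule N e) :
    IsClass N 5 4 :=
  have hright := hwd.rightClass_four hN he
  ⟨hN.leftClass_succ_of_rightClass hright, hright⟩
end
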